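/- arXiv:2005.05180 — 3 statements merged into one kernel-verified Lean document; each statement's English description precedes it below -/
import Mathlib

section
/- Let n ≥ 1, let U ⊆ ℝⁿ be an open convex set with 0 ∉ U but 0 ∈ closure(U), let C > 0, and let v : U → ℝ be twice continuously differentiable with ‖Dv(y)‖ ≤ 2C‖y‖^(1/4) and ‖D²v(y)‖ ≤ C‖y‖^(−3/4) for every y ∈ U. Then the gradient map y ↦ Dv(y) extends to a continuous map G on the closure of U satisfying ‖G(p) − G(q)‖ ≤ 8C‖p − q‖^(1/4) for all p, q in the closure of U, and G(0) = 0. -/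
open Filter Topology Set

/-- Auxiliary: choose δ so that `8*C*t^(1/4) < ε` whenever `0 ≤ t < δ`. -/
lemma aux_delta {C ε : ℝ} (hC : 0 < C) (hε : 0 < ε) :
    ∃ δ > 0, ∀ t : ℝ, 0 ≤ t → t < δ → 8 * C * t ^ ((1 : ℝ) / 4) < ε := by
  refine ⟨(ε / (8 * C)) ^ (4 : ℕ), by positivity, fun t ht htδ => ?_⟩
  have hq : (0 : ℝ) < ε / (8 * C) := by positivity
  have h1 : t ^ ((1 : ℝ) / 4) < ((ε / (8 * C)) ^ (4 : ℕ)) ^ ((1 : ℝ) / 4) :=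
    Real.rpow_lt_rpow ht htδ (by norm_num)
  have h2 : ((ε / (8 * C)) ^ (4 : ℕ)) ^ ((1 : ℝ) / 4) = ε / (8 * C) := by
    rw [← Real.rpow_natCast (ε / (8 * C)) 4, ← Real.rpow_mul hq.le]
    norm_num
  have h3 : 8 * C * t ^ ((1 : ℝ) / 4) < 8 * C * (ε / (8 * C)) := by
    have h8C : (0 : ℝ) < 8 * C := by positivity
    rw [← h2]; exact (mul_lt_mul_iff_right₀ h8C).mpr h1
  have h4 : 8 * C * (ε / (8 * C)) = ε := by field_simp
  linarith

/-- `(16 : ℝ) ^ (1/4 : ℝ) = 2`. -/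
lemma aux_sixteen : (16 : ℝ) ^ ((1 : ℝ) / 4) = 2 := by
  rw [show (16 : ℝ) = 2 ^ (4 : ℕ) by norm_num, ← Real.rpow_natCast 2 4,
    ← Real.rpow_mul (by norm_num : (0:ℝ) ≤ 2)]
  norm_num

set_option maxHeartbeats 1600000 in
/-- C^{1,1/4}-extension of the gradient up to the boundary, with vanishing
gradient at the origin. -/
theorem stmt_1 (n : ℕ) (hn : 1 ≤ n) (U : Set (EuclideanSpace ℝ (Fin n)))
    (hU : IsOpen U) (hconv : Convex ℝ U) (h0 : (0 : EuclideanSpace ℝ (Fin n)) ∉ U)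
    (h0cl : (0 : EuclideanSpace ℝ (Fin n)) ∈ closure U)
    (C : ℝ) (hC : 0 < C) (v : EuclideanSpace ℝ (Fin n) → ℝ)
    (hv : ContDiffOn ℝ 2 v U)
    (hD1 : ∀ y ∈ U, ‖fderiv ℝ v y‖ ≤ 2 * C * ‖y‖ ^ ((1 : ℝ) / 4))
    (hD2 : ∀ y ∈ U, ‖fderiv ℝ (fderiv ℝ v) y‖ ≤ C * ‖y‖ ^ (-(3 : ℝ) / 4)) :
    ∃ G : EuclideanSpace ℝ (Fin n) → (EuclideanSpace ℝ (Fin n) →L[ℝ] ℝ),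
      ContinuousOn G (closure U) ∧
      (∀ y ∈ U, G y = fderiv ℝ v y) ∧
      (∀ p ∈ closure U, ∀ q ∈ closure U,
        ‖G p - G q‖ ≤ 8 * C * ‖p - q‖ ^ ((1 : ℝ) / 4)) ∧
      G 0 = 0 := by
  classical
  set f : EuclideanSpace ℝ (Fin n) → (EuclideanSpace ℝ (Fin n) →L[ℝ] ℝ) :=
    fderiv ℝ v with hf_def
  -- differentiability of f on U
  have hf_diff : ∀ x ∈ U, HasFDerivAt f (fderiv ℝ f x) x := by
    intro x hx
    have h1 : ContDiffAt ℝ 2 v x := (hv x hx).contDiffAt (hU.mem_nhds hx)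
    have h2 : ContDiffAt ℝ 1 (fderiv ℝ v) x := h1.fderiv_right (by norm_num)
    exact (h2.differentiableAt one_ne_zero).hasFDerivAt
  -- Step 1: interior Hölder estimate
  have key1 : ∀ p ∈ U, ∀ q ∈ U, ‖q‖ ≤ ‖p‖ →
      ‖f p - f q‖ ≤ 8 * C * ‖p - q‖ ^ ((1 : ℝ) / 4) := by
    intro p hp q hq hqp
    by_cases hpq : p = q
    · simp [hpq, Real.zero_rpow (by norm_num : (1:ℝ)/4 ≠ 0)]
    set d := ‖p - q‖ with hd_def
    have hd0 : 0 < d := by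
      simpa [hd_def] using sub_ne_zero.mpr hpq
    rcases le_or_gt ‖q‖ (2 * d) with hfar | hnear
    · -- far case: use hD1 directly
      have hpb : ‖p‖ ≤ 16 * d := by
        have : ‖p‖ ≤ ‖q‖ + d := by
          have := norm_sub_norm_le p q
          simpa [hd_def] using (by linarith [norm_sub_norm_le p q] : ‖p‖ ≤ ‖q‖ + ‖p - q‖)
        linarith
      have hqb : ‖q‖ ≤ 16 * d := by linarith
      have hr : ∀ x : EuclideanSpace ℝ (Fin n), ‖x‖ ≤ 16 * d → ‖x‖ ^ ((1:ℝ)/4) ≤ 2 * d ^ ((1:ℝ)/4) := by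
        intro x hx
        have h1 : ‖x‖ ^ ((1:ℝ)/4) ≤ (16 * d) ^ ((1:ℝ)/4) :=
          Real.rpow_le_rpow (norm_nonneg x) hx (by norm_num)
        have h2 : (16 * d) ^ ((1:ℝ)/4) = 2 * d ^ ((1:ℝ)/4) := by
          rw [Real.mul_rpow (by norm_num) hd0.le, aux_sixteen]
        linarith
      have h1 : ‖f p - f q‖ ≤ ‖f p‖ + ‖f q‖ := norm_sub_le _ _
      have h2 := hD1 p hp
      have h3 := hD1 q hq
      have h4 := hr p hpb
      have h5 := hr q hqb
      have h6 : ‖f p‖ ≤ 2 * C * (2 * d ^ ((1:ℝ)/4)) := by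
        calc ‖f p‖ ≤ 2 * C * ‖p‖ ^ ((1:ℝ)/4) := h2
          _ ≤ 2 * C * (2 * d ^ ((1:ℝ)/4)) := by nlinarith
      have h7 : ‖f q‖ ≤ 2 * C * (2 * d ^ ((1:ℝ)/4)) := by
        calc ‖f q‖ ≤ 2 * C * ‖q‖ ^ ((1:ℝ)/4) := h3
          _ ≤ 2 * C * (2 * d ^ ((1:ℝ)/4)) := by nlinarith
      calc ‖f p - f q‖ ≤ ‖f p‖ + ‖f q‖ := h1
        _ ≤ 8 * C * d ^ ((1:ℝ)/4) := by linarith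
    · -- near case: mean value inequality on the segment
      have hseg : segment ℝ q p ⊆ U := hconv.segment_subset hq hp
      have hlow : ∀ y ∈ segment ℝ q p, d ≤ ‖y‖ := by
        intro y hy
        obtain ⟨a, b, ha, hb, hab, rfl⟩ := hy
        have hqy : ‖q - (a • q + b • p)‖ = b * ‖q - p‖ := by
          have : q - (a • q + b • p) = b • (q - p) := by
            have ha' : a = 1 - b := by linarith
            rw [ha']
            module
          rw [this, norm_smul]
          simp [abs_of_nonneg hb]
        have hqp' : ‖q - p‖ = d := by rw [hd_def, norm_sub_rev]
        have h1 : ‖q - (a • q + b • p)‖ ≤ d := by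
          rw [hqy, hqp']
          nlinarith
        have h2 : ‖q‖ - ‖a • q + b • p‖ ≤ ‖q - (a • q + b • p)‖ :=
          norm_sub_norm_le _ _
        linarith
      have hbound : ∀ y ∈ segment ℝ q p,
          ‖fderiv ℝ f y‖ ≤ C * d ^ (-(3:ℝ)/4) := by
        intro y hy
        have h1 := hD2 y (hseg hy)
        have h2 : ‖y‖ ^ (-(3:ℝ)/4) ≤ d ^ (-(3:ℝ)/4) :=
          Real.rpow_le_rpow_of_nonpos hd0 (hlow y hy) (by norm_num)
        calc ‖fderiv ℝ f y‖ = ‖fderiv ℝ (fderiv ℝ v) y‖ := rfl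
          _ ≤ C * ‖y‖ ^ (-(3:ℝ)/4) := h1
          _ ≤ C * d ^ (-(3:ℝ)/4) := by nlinarith
      have hmvt : ‖f p - f q‖ ≤ C * d ^ (-(3:ℝ)/4) * ‖p - q‖ :=
        (convex_segment q p).norm_image_sub_le_of_norm_hasFDerivWithin_le
          (fun x hx => (hf_diff x (hseg hx)).hasFDerivWithinAt)
          hbound (left_mem_segment ℝ q p) (right_mem_segment ℝ q p)
      have hpow : d ^ (-(3:ℝ)/4) * d = d ^ ((1:ℝ)/4) := by
        nth_rewrite 2 [← Real.rpow_one d]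
        rw [← Real.rpow_add hd0]
        norm_num
      have h8 : ‖f p - f q‖ ≤ C * d ^ ((1:ℝ)/4) := by
        calc ‖f p - f q‖ ≤ C * d ^ (-(3:ℝ)/4) * ‖p - q‖ := hmvt
          _ = C * (d ^ (-(3:ℝ)/4) * d) := by rw [← hd_def]; ring
          _ = C * d ^ ((1:ℝ)/4) := by rw [hpow]
      have hpos : 0 ≤ d ^ ((1:ℝ)/4) := Real.rpow_nonneg hd0.le _
      nlinarith
  -- symmetrized interior Hölder estimate
  have key : ∀ p ∈ U, ∀ q ∈ U, ‖f p - f q‖ ≤ 8 * C * ‖p - q‖ ^ ((1 : ℝ) / 4) := by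
    intro p hp q hq
    rcases le_total ‖q‖ ‖p‖ with h | h
    · exact key1 p hp q hq h
    · have := key1 q hq p hp h
      rwa [norm_sub_rev (f q), norm_sub_rev q p] at this
  -- Step 2: existence of limits at boundary points
  have hlim : ∀ p ∈ closure U, ∃ L, Tendsto f (𝓝[U] p) (𝓝 L) := by
    intro p hp
    haveI : (𝓝[U] p).NeBot := mem_closure_iff_nhdsWithin_neBot.mp hp
    have hcauchy : Cauchy (map f (𝓝[U] p)) := by
      rw [Metric.cauchy_iff]
      refine ⟨map_neBot, fun ε hε => ?_⟩
      obtain ⟨δ, hδ, hδε⟩ := aux_delta hC hε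
      refine ⟨f '' (U ∩ Metric.ball p (δ / 2)), ?_, ?_⟩
      · exact image_mem_map (inter_mem_nhdsWithin U
          (Metric.ball_mem_nhds p (by positivity)))
      · rintro x ⟨a, ⟨haU, hab⟩, rfl⟩ y ⟨b, ⟨hbU, hbb⟩, rfl⟩
        have hab' : ‖a - b‖ < δ := by
          have h1 : dist a p < δ / 2 := hab
          have h2 : dist b p < δ / 2 := hbb
          have := dist_triangle a p b
          rw [← dist_eq_norm]
          calc dist a b ≤ dist a p + dist p b := dist_triangle a p b
            _ < δ := by rw [dist_comm p b]; linarith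
        calc dist (f a) (f b) = ‖f a - f b‖ := dist_eq_norm _ _
          _ ≤ 8 * C * ‖a - b‖ ^ ((1:ℝ)/4) := key a haU b hbU
          _ < ε := hδε _ (norm_nonneg _) hab'
    obtain ⟨L, hL⟩ := CompleteSpace.complete hcauchy
    exact ⟨L, hL⟩
  -- define G
  set G : EuclideanSpace ℝ (Fin n) → (EuclideanSpace ℝ (Fin n) →L[ℝ] ℝ) := fun p =>
    if h : p ∈ closure U then Classical.choose (hlim p h) else 0 with hG_def
  have hGlim : ∀ p (hp : p ∈ closure U), Tendsto f (𝓝[U] p) (𝓝 (G p)) := by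
    intro p hp
    have h1 : G p = Classical.choose (hlim p hp) := dif_pos hp
    rw [h1]
    exact Classical.choose_spec (hlim p hp)
  -- G = f on U
  have hGU : ∀ y ∈ U, G y = f y := by
    intro y hy
    haveI : (𝓝[U] y).NeBot :=
      mem_closure_iff_nhdsWithin_neBot.mp (subset_closure hy)
    have h1 : Tendsto f (𝓝[U] y) (𝓝 (f y)) :=
      (hv.continuousOn_fderiv_of_isOpen hU (by norm_num)) y hy
    exact tendsto_nhds_unique (hGlim y (subset_closure hy)) h1
  -- Hölder estimate on the closure
  have hGhold : ∀ p ∈ closure U, ∀ q ∈ closure U,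
      ‖G p - G q‖ ≤ 8 * C * ‖p - q‖ ^ ((1 : ℝ) / 4) := by
    intro p hp q hq
    haveI : (𝓝[U] p).NeBot := mem_closure_iff_nhdsWithin_neBot.mp hp
    haveI : (𝓝[U] q).NeBot := mem_closure_iff_nhdsWithin_neBot.mp hq
    have h1 : Tendsto (fun x : EuclideanSpace ℝ (Fin n) × EuclideanSpace ℝ (Fin n) => ‖f x.1 - f x.2‖)
        ((𝓝[U] p) ×ˢ (𝓝[U] q)) (𝓝 ‖G p - G q‖) :=
      (((hGlim p hp).comp tendsto_fst).sub ((hGlim q hq).comp tendsto_snd)).norm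
    have h2 : Tendsto (fun x : EuclideanSpace ℝ (Fin n) × EuclideanSpace ℝ (Fin n) => 8 * C * ‖x.1 - x.2‖ ^ ((1:ℝ)/4))
        ((𝓝[U] p) ×ˢ (𝓝[U] q)) (𝓝 (8 * C * ‖p - q‖ ^ ((1:ℝ)/4))) := by
      have hn : Tendsto (fun x : EuclideanSpace ℝ (Fin n) × EuclideanSpace ℝ (Fin n) => ‖x.1 - x.2‖)
          ((𝓝[U] p) ×ˢ (𝓝[U] q)) (𝓝 ‖p - q‖) := by
        have h3 : Tendsto (fun x : EuclideanSpace ℝ (Fin n) × EuclideanSpace ℝ (Fin n) => x.1 - x.2)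
            ((𝓝[U] p) ×ˢ (𝓝[U] q)) (𝓝 (p - q)) :=
          ((tendsto_fst.mono_left (prod_mono nhdsWithin_le_nhds nhdsWithin_le_nhds)).sub
            (tendsto_snd.mono_left (prod_mono nhdsWithin_le_nhds nhdsWithin_le_nhds)))
        exact h3.norm
      exact (hn.rpow_const (Or.inr (by norm_num))).const_mul _
    refine le_of_tendsto_of_tendsto h1 h2 ?_
    filter_upwards [prod_mem_prod self_mem_nhdsWithin self_mem_nhdsWithin] with x hx
    exact key x.1 hx.1 x.2 hx.2
  -- continuity on the closure
  have hGcont : ContinuousOn G (closure U) := by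
    intro p hp
    rw [Metric.continuousWithinAt_iff]
    intro ε hε
    obtain ⟨δ, hδ, hδε⟩ := aux_delta hC hε
    refine ⟨δ, hδ, fun q hq hqp => ?_⟩
    calc dist (G q) (G p) = ‖G q - G p‖ := dist_eq_norm _ _
      _ ≤ 8 * C * ‖q - p‖ ^ ((1:ℝ)/4) := hGhold q hq p hp
      _ < ε := hδε _ (norm_nonneg _) (by rwa [← dist_eq_norm])
  -- G 0 = 0
  have hG0 : G 0 = 0 := by
    haveI : (𝓝[U] (0 : EuclideanSpace ℝ (Fin n))).NeBot := mem_closure_iff_nhdsWithin_neBot.mp h0cl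
    have h1 : Tendsto f (𝓝[U] (0 : EuclideanSpace ℝ (Fin n))) (𝓝 0) := by
      have hb : Tendsto (fun y : EuclideanSpace ℝ (Fin n) => 2 * C * ‖y‖ ^ ((1:ℝ)/4)) (𝓝[U] (0 : EuclideanSpace ℝ (Fin n))) (𝓝 0) := by
        have hn : Tendsto (fun y : EuclideanSpace ℝ (Fin n) => ‖y‖) (𝓝[U] (0 : EuclideanSpace ℝ (Fin n))) (𝓝 0) := by
          have := (continuous_norm.tendsto (0 : EuclideanSpace ℝ (Fin n))).mono_left
            (nhdsWithin_le_nhds (s := U))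
          simpa using this
        have := (hn.rpow_const (Or.inr (by norm_num : (0:ℝ) ≤ 1/4))).const_mul (2 * C)
        simpa [Real.zero_rpow (by norm_num : (1:ℝ)/4 ≠ 0)] using this
      exact squeeze_zero_norm' (eventually_nhdsWithin_of_forall (fun y hy => hD1 y hy)) hb
    exact tendsto_nhds_unique (hGlim 0 h0cl) h1
  exact ⟨G, hGcont, hGU, hGhold, hG0⟩
end

section
/- Let n ≥ 2, let V = {y ∈ ℝⁿ : ‖y‖ < 1 and yₙ > 0} and L = {y ∈ ℝⁿ : ‖y‖ < 1 and yₙ = 0}, and let eₙ be the n-th standard basis vector of ℝⁿ. Suppose u : V ∪ L → ℝ is continuous, u is harmonic on V, u(y) ≤ 0 for all y ∈ V, u = 0 on L, and lim_{t→0⁺} u(t·eₙ)/t = 0. Then u(y) = 0 for all y ∈ V. -/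
/-- A function is harmonic on an open set `U ⊆ ℝⁿ` if it is `C²` on `U` and its Laplacian
`∑ᵢ ∂²f/∂yᵢ²` vanishes identically on `U`. -/
def IsHarmonicOn {n : ℕ} (f : EuclideanSpace ℝ (Fin n) → ℝ)
    (U : Set (EuclideanSpace ℝ (Fin n))) : Prop :=
  ContDiffOn ℝ 2 f U ∧
    ∀ y ∈ U, ∑ i : Fin n,
      fderiv ℝ (fun x => fderiv ℝ f x (EuclideanSpace.single i 1)) y
        (EuclideanSpace.single i 1) = 0

open Metric Set Filter

noncomputable section
namespace S5

variable {n : ℕ}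

abbrev Esp (n : ℕ) := EuclideanSpace ℝ (Fin n)

def sgl (i : Fin n) : Esp n := EuclideanSpace.single i (1:ℝ)

def lapAt (f : Esp n → ℝ) (x : Esp n) : ℝ :=
  ∑ i, fderiv ℝ (fun z => fderiv ℝ f z (sgl i)) x (sgl i)

def qf (c : Esp n) (y : Esp n) : ℝ := ∑ i, (y i - c i)^2

def qL (c : Esp n) (x : Esp n) : Esp n →L[ℝ] ℝ :=
  ∑ i, (2*(x i - c i)) • EuclideanSpace.proj i

theorem proj_apply (i : Fin n) (x : Esp n) : EuclideanSpace.proj (𝕜 := ℝ) i x = x i := rfl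

theorem hasFDerivAt_coord (c : Esp n) (i : Fin n) (x : Esp n) :
    HasFDerivAt (fun y : Esp n => y i - c i) (EuclideanSpace.proj (𝕜 := ℝ) i) x :=
  (EuclideanSpace.proj (𝕜 := ℝ) i).hasFDerivAt.sub_const _

theorem hasFDerivAt_qf (c x : Esp n) : HasFDerivAt (qf c) (qL c x) x := by
  apply HasFDerivAt.fun_sum
  intro i _
  have h1 := hasFDerivAt_coord c i x
  have := h1.fun_mul h1
  have h2 : (x i - c i) • EuclideanSpace.proj (𝕜 := ℝ) i + (x i - c i) • EuclideanSpace.proj (𝕜 := ℝ) i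
      = (2*(x i - c i)) • EuclideanSpace.proj (𝕜 := ℝ) i := by
    rw [← two_smul ℝ, smul_smul]
  rw [h2] at this
  simpa [sq] using this

theorem qL_apply_sgl (c x : Esp n) (j : Fin n) : qL c x (sgl j) = 2*(x j - c j) := by
  simp [qL, sgl, ContinuousLinearMap.sum_apply, proj_apply,
    EuclideanSpace.single_apply, Finset.sum_ite_eq]
end S5

namespace S5
variable {n : ℕ}

def gf (c : Esp n) (α ε η : ℝ) (y : Esp n) : ℝ := ε * Real.exp (-(α * qf c y)) + η * qf c y
def Af (c : Esp n) (α ε η : ℝ) (z : Esp n) : ℝ := η - ε*α*Real.exp (-(α * qf c z))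

theorem hasFDerivAt_gf (c : Esp n) (α ε η : ℝ) (x : Esp n) :
    HasFDerivAt (gf c α ε η) (Af c α ε η x • qL c x) x := by
  have hq := hasFDerivAt_qf c x
  have h1 : HasFDerivAt (fun y => -(α * qf c y)) ((-α) • qL c x) x := by
    have := (hq.const_mul α).fun_neg
    rwa [← neg_smul] at this
  have h2 := h1.exp
  have h3 := (h2.const_mul ε).add (hq.const_mul η)
  have heq : ε • Real.exp (-(α * qf c x)) • (-α) • qL c x + η • qL c x
      = Af c α ε η x • qL c x := by
    ext v
    simp [Af, ContinuousLinearMap.add_apply, ContinuousLinearMap.smul_apply]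
    ring
  rw [heq] at h3
  exact h3

theorem fderiv_gf_sgl (c : Esp n) (α ε η : ℝ) (j : Fin n) (z : Esp n) :
    fderiv ℝ (gf c α ε η) z (sgl j) = Af c α ε η z * (2*(z j - c j)) := by
  rw [(hasFDerivAt_gf c α ε η z).fderiv]
  simp [ContinuousLinearMap.smul_apply, qL_apply_sgl]

theorem hasFDerivAt_Af (c : Esp n) (α ε η : ℝ) (x : Esp n) :
    HasFDerivAt (Af c α ε η) ((ε*α^2*Real.exp (-(α * qf c x))) • qL c x) x := by
  have hq := hasFDerivAt_qf c x
  have h1 : HasFDerivAt (fun y => -(α * qf c y)) ((-α) • qL c x) x := by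
    have := (hq.const_mul α).fun_neg
    rwa [← neg_smul] at this
  have h2 := (h1.exp.const_mul (ε*α)).const_sub η
  have heq : -((ε*α) • Real.exp (-(α * qf c x)) • (-α) • qL c x)
      = (ε*α^2*Real.exp (-(α * qf c x))) • qL c x := by
    ext v
    simp [ContinuousLinearMap.smul_apply]
    ring
  rw [heq] at h2
  exact h2

theorem sgl_apply_self (j : Fin n) : sgl j j = 1 := by
  simp [sgl, EuclideanSpace.single_apply]

theorem d2_gf (c : Esp n) (α ε η : ℝ) (x : Esp n) (j : Fin n) :
    fderiv ℝ (fun z => fderiv ℝ (gf c α ε η) z (sgl j)) x (sgl j)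
      = ε*α^2*Real.exp (-(α * qf c x))*(2*(x j - c j))^2 + Af c α ε η x * 2 := by
  have hfun : (fun z => fderiv ℝ (gf c α ε η) z (sgl j))
      = fun z => Af c α ε η z * (2*(z j - c j)) := funext (fderiv_gf_sgl c α ε η j)
  rw [hfun]
  have h1 := hasFDerivAt_Af c α ε η x
  have h2 : HasFDerivAt (fun z : Esp n => 2*(z j - c j))
      ((2:ℝ) • EuclideanSpace.proj (𝕜 := ℝ) j) x := (hasFDerivAt_coord c j x).const_mul 2
  have h3 := h1.fun_mul h2
  rw [h3.fderiv]
  have hp : EuclideanSpace.proj (𝕜 := ℝ) j (sgl j) = 1 := by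
    rw [proj_apply, sgl_apply_self]
  simp [ContinuousLinearMap.add_apply, ContinuousLinearMap.smul_apply, qL_apply_sgl, hp]
  ring

theorem lapAt_gf (c : Esp n) (α ε η : ℝ) (x : Esp n) :
    lapAt (gf c α ε η) x
      = ε*Real.exp (-(α*qf c x))*(4*α^2*qf c x - 2*α*(n:ℝ)) + 2*(n:ℝ)*η := by
  unfold lapAt
  have hsum : ∀ j : Fin n, fderiv ℝ (fun z => fderiv ℝ (gf c α ε η) z (sgl j)) x (sgl j)
      = ε*α^2*Real.exp (-(α * qf c x))*(2*(x j - c j))^2 + Af c α ε η x * 2 :=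
    d2_gf c α ε η x
  rw [Finset.sum_congr rfl (fun j _ => hsum j)]
  rw [Finset.sum_add_distrib, ← Finset.mul_sum, Finset.sum_const, Finset.card_univ]
  have hq4 : ∑ j : Fin n, (2*(x j - c j))^2 = 4 * qf c x := by
    rw [qf, Finset.mul_sum]
    exact Finset.sum_congr rfl fun j _ => by ring
  rw [hq4]
  simp [Af, Fintype.card_fin, nsmul_eq_mul]
  ring

theorem diffAt_fderiv_apply {U : Set (Esp n)} (hU : IsOpen U) {x : Esp n} (hx : x ∈ U)
    {f : Esp n → ℝ} (hf : ContDiffOn ℝ 2 f U) (v : Esp n) :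
    DifferentiableAt ℝ (fun z => fderiv ℝ f z v) x := by
  have h1 : ContDiffOn ℝ 1 (fderiv ℝ f) U := hf.fderiv_of_isOpen hU (by norm_num)
  have h2 : ContDiffOn ℝ 1 (fun z => fderiv ℝ f z v) U := h1.clm_apply contDiffOn_const
  exact (h2.differentiableOn one_ne_zero).differentiableAt (hU.mem_nhds hx)

theorem lapAt_add {U : Set (Esp n)} (hU : IsOpen U) {x : Esp n} (hx : x ∈ U)
    {f : Esp n → ℝ} (hf : ContDiffOn ℝ 2 f U)
    {g : Esp n → ℝ} {G : Esp n → (Esp n →L[ℝ] ℝ)} {G2 : Fin n → (Esp n →L[ℝ] ℝ)}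
    (hg1 : ∀ z, HasFDerivAt g (G z) z)
    (hg2 : ∀ j, HasFDerivAt (fun z => G z (sgl j)) (G2 j) x) :
    lapAt (fun y => f y + g y) x = lapAt f x + ∑ j, G2 j (sgl j) := by
  have hfd : ∀ z ∈ U, DifferentiableAt ℝ f z := fun z hz =>
    (hf.differentiableOn (by norm_num)).differentiableAt (hU.mem_nhds hz)
  have key : ∀ j : Fin n,
      fderiv ℝ (fun z => fderiv ℝ (fun y => f y + g y) z (sgl j)) x (sgl j)
        = fderiv ℝ (fun z => fderiv ℝ f z (sgl j)) x (sgl j) + G2 j (sgl j) := by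
    intro j
    have hev : (fun z => fderiv ℝ (fun y => f y + g y) z (sgl j))
        =ᶠ[nhds x] (fun z => fderiv ℝ f z (sgl j) + G z (sgl j)) := by
      filter_upwards [hU.mem_nhds hx] with z hz
      rw [fderiv_fun_add (hfd z hz) (hg1 z).differentiableAt, (hg1 z).fderiv]
      rfl
    rw [hev.fderiv_eq]
    have hφ := diffAt_fderiv_apply hU hx hf (sgl j)
    rw [fderiv_fun_add hφ (hg2 j).differentiableAt, (hg2 j).fderiv]
    rfl
  rw [lapAt, Finset.sum_congr rfl (fun j _ => key j), Finset.sum_add_distrib]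
  rfl

theorem second_deriv_nonpos {U : Set (Esp n)} (hU : IsOpen U) {x : Esp n} (hx : x ∈ U)
    {f : Esp n → ℝ} (hf : ContDiffOn ℝ 2 f U) (hmax : IsLocalMax f x) (j : Fin n) :
    fderiv ℝ (fun z => fderiv ℝ f z (sgl j)) x (sgl j) ≤ 0 := by
  by_contra hc
  push_neg at hc
  set v := sgl j with hv
  set φ : Esp n → ℝ := fun z => fderiv ℝ f z v with hφdef
  set C := fderiv ℝ φ x v with hC
  -- the curve
  have hψ : ∀ t : ℝ, HasDerivAt (fun t : ℝ => x + t • v) v t := by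
    intro t
    simpa using ((hasDerivAt_id t).smul_const v).const_add x
  set g1 : ℝ → ℝ := fun t => φ (x + t • v) with hg1def
  have hg1d : HasDerivAt g1 C 0 := by
    have hφd := (diffAt_fderiv_apply hU hx hf v).hasFDerivAt
    have hx0 : x = x + (0:ℝ) • v := by simp
    rw [hx0] at hφd
    have := hφd.comp_hasDerivAt 0 (hψ 0)
    simp at this
    exact this
  have hg10 : g1 0 = 0 := by
    have : fderiv ℝ f x = 0 := hmax.fderiv_eq_zero
    simp [hg1def, hφdef, this]
  -- g1 positive on small right interval
  have hslope : Tendsto (fun t : ℝ => g1 t / t) (nhdsWithin 0 (Set.Ioi 0)) (nhds C) := by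
    have := hasDerivAt_iff_tendsto_slope.1 hg1d
    have h2 := this.mono_left (nhdsWithin_mono 0 (by intro t ht; exact ne_of_gt ht))
    refine h2.congr ?_
    intro t
    simp [slope, hg10, div_eq_inv_mul]
  have hpos : ∀ᶠ t in nhdsWithin 0 (Set.Ioi 0), 0 < g1 t := by
    have hev := hslope.eventually (eventually_gt_nhds (show C/2 < C by linarith))
    filter_upwards [hev, self_mem_nhdsWithin] with t ht (ht2 : t ∈ Set.Ioi 0)
    have hq : 0 < g1 t / t := lt_trans (by positivity) ht
    rcases div_pos_iff.mp hq with ⟨h, _⟩ | ⟨_, h⟩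
    · exact h
    · exact absurd ht2 (by simpa using not_lt.2 h.le)
  -- extract δ's
  obtain ⟨δ1, hδ1mem, hδ1⟩ := mem_nhdsGT_iff_exists_Ioo_subset.1 hpos
  obtain ⟨δ2, hδ2pos, hδ2⟩ := Metric.eventually_nhds_iff.1 hmax
  obtain ⟨δ3, hδ3pos, hδ3⟩ := Metric.isOpen_iff.1 hU x hx
  have hδ1pos : 0 < δ1 := hδ1mem
  set δ := (min δ1 (min δ2 δ3))/2 with hδdef
  have hδpos : 0 < δ := by positivity
  have hδlt1 : δ < δ1 := by
    have : min δ1 (min δ2 δ3) ≤ δ1 := min_le_left _ _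
    have h2 : 0 < min δ1 (min δ2 δ3) := by positivity
    rw [hδdef]; linarith
  have hδlt2 : δ < δ2 := by
    have : min δ1 (min δ2 δ3) ≤ δ2 := le_trans (min_le_right _ _) (min_le_left _ _)
    have h2 : 0 < min δ1 (min δ2 δ3) := by positivity
    rw [hδdef]; linarith
  have hδlt3 : δ < δ3 := by
    have : min δ1 (min δ2 δ3) ≤ δ3 := le_trans (min_le_right _ _) (min_le_right _ _)
    have h2 : 0 < min δ1 (min δ2 δ3) := by positivity
    rw [hδdef]; linarith
  have hnv : ‖v‖ = 1 := by rw [hv, sgl]; simp [EuclideanSpace.norm_single]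
  have hdist : ∀ t : ℝ, 0 ≤ t → t ≤ δ → dist (x + t • v) x ≤ δ := by
    intro t ht0 htδ
    rw [dist_eq_norm]
    simp only [add_sub_cancel_left]
    rw [norm_smul, hnv, mul_one, Real.norm_eq_abs, abs_of_nonneg ht0]
    exact htδ
  have hmem : ∀ t ∈ Set.Icc (0:ℝ) δ, x + t • v ∈ U := by
    intro t ht
    exact hδ3 (lt_of_le_of_lt (hdist t ht.1 ht.2) hδlt3)
  set g : ℝ → ℝ := fun t => f (x + t • v) with hgdef
  have hfd : ∀ z ∈ U, DifferentiableAt ℝ f z := fun z hz =>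
    (hf.differentiableOn (by norm_num)).differentiableAt (hU.mem_nhds hz)
  have hg : ∀ t ∈ Set.Icc (0:ℝ) δ, HasDerivAt g (g1 t) t := by
    intro t ht
    have hd := (hfd _ (hmem t ht)).hasFDerivAt
    have := hd.comp_hasDerivAt t (hψ t)
    exact this
  have hmono : StrictMonoOn g (Set.Icc 0 δ) := by
    apply strictMonoOn_of_deriv_pos (convex_Icc 0 δ)
    · intro t ht
      exact (hg t ht).continuousAt.continuousWithinAt
    · intro t ht
      rw [interior_Icc] at ht
      rw [(hg t ⟨ht.1.le, ht.2.le⟩).deriv]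
      exact hδ1 ⟨ht.1, lt_trans ht.2 hδlt1⟩
  have hlt : g 0 < g δ := hmono ⟨le_rfl, hδpos.le⟩ ⟨hδpos.le, le_rfl⟩ hδpos
  have hg0 : g 0 = f x := by simp [hgdef]
  have hgδ : g δ ≤ f x := hδ2 (lt_of_le_of_lt (hdist δ hδpos.le le_rfl) hδlt2)
  rw [hg0] at hlt
  linarith

theorem max_on_frontier {A : Set (Esp n)} (hA : IsOpen A) (hb : Bornology.IsBounded A)
    (hne : A.Nonempty) {f : Esp n → ℝ} (hc : ContinuousOn f (closure A))
    (hf2 : ContDiffOn ℝ 2 f A) (hlap : ∀ y ∈ A, 0 < lapAt f y) :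
    ∃ z ∈ frontier A, ∀ y ∈ closure A, f y ≤ f z := by
  have hcomp : IsCompact (closure A) :=
    Metric.isCompact_of_isClosed_isBounded isClosed_closure hb.closure
  obtain ⟨z, hz, hzmax⟩ := hcomp.exists_isMaxOn hne.closure hc
  by_cases hzA : z ∈ A
  · exfalso
    have hlm : IsLocalMax f z := hzmax.isLocalMax (mem_nhds_iff.2 ⟨A, subset_closure, hA, hzA⟩)
    have hle : lapAt f z ≤ 0 := by
      apply Finset.sum_nonpos
      intro j _
      exact second_deriv_nonpos hA hzA hf2 hlm j
    linarith [hlap z hzA]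
  · refine ⟨z, ?_, hzmax⟩
    rw [hA.frontier_eq]
    exact ⟨hz, hzA⟩


theorem qf_nonneg (c y : Esp n) : 0 ≤ qf c y :=
  Finset.sum_nonneg fun i _ => sq_nonneg _

theorem continuous_qf (c : Esp n) : Continuous (qf c) :=
  continuous_iff_continuousAt.2 fun y => (hasFDerivAt_qf c y).continuousAt

theorem contDiff_gf (c : Esp n) (α ε η : ℝ) : ContDiff ℝ 2 (gf c α ε η) := by
  have hq : ContDiff ℝ 2 (qf c) := by
    apply ContDiff.sum
    intro i _
    exact ((EuclideanSpace.proj (𝕜 := ℝ) i).contDiff.sub contDiff_const).pow 2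
  have he : ContDiff ℝ 2 fun y => Real.exp (-(α * qf c y)) :=
    ((contDiff_const.mul hq).neg).exp
  exact (contDiff_const.mul he).add (contDiff_const.mul hq)

theorem lapAt_add_gf {A : Set (Esp n)} (hA : IsOpen A) {x : Esp n} (hx : x ∈ A)
    {f : Esp n → ℝ} (hf : ContDiffOn ℝ 2 f A) (c : Esp n) (α ε η : ℝ) :
    lapAt (fun y => f y + gf c α ε η y) x = lapAt f x + lapAt (gf c α ε η) x := by
  set G2 : Fin n → (Esp n →L[ℝ] ℝ) := fun j =>
    Af c α ε η x • ((2:ℝ) • EuclideanSpace.proj (𝕜 := ℝ) j)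
      + (2*(x j - c j)) • ((ε*α^2*Real.exp (-(α * qf c x))) • qL c x) with hG2
  have hg1 : ∀ z, HasFDerivAt (gf c α ε η) (Af c α ε η z • qL c z) z :=
    hasFDerivAt_gf c α ε η
  have hg2 : ∀ j, HasFDerivAt (fun z => (Af c α ε η z • qL c z) (sgl j)) (G2 j) x := by
    intro j
    have hfun : (fun z => (Af c α ε η z • qL c z) (sgl j))
        = fun z => Af c α ε η z * (2*(z j - c j)) := by
      funext z
      simp [ContinuousLinearMap.smul_apply, qL_apply_sgl]
    rw [hfun, hG2]
    exact (hasFDerivAt_Af c α ε η x).mul ((hasFDerivAt_coord c j x).const_mul 2)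
  rw [lapAt_add hA hx hf hg1 hg2]
  congr 1
  have : lapAt (gf c α ε η) x = ∑ j : Fin n, G2 j (sgl j) := by
    unfold lapAt
    apply Finset.sum_congr rfl
    intro j _
    rw [d2_gf c α ε η x j, hG2]
    have hp : EuclideanSpace.proj (𝕜 := ℝ) j (sgl j) = 1 := by
      rw [proj_apply, sgl_apply_self]
    simp [ContinuousLinearMap.add_apply, ContinuousLinearMap.smul_apply, qL_apply_sgl, hp]
    ring
  rw [this]

theorem comparison (hn : 0 < n) {u : Esp n → ℝ} {A : Set (Esp n)}
    (hA : IsOpen A) (hb : Bornology.IsBounded A)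
    (hu2 : ContDiffOn ℝ 2 u A) (hlap : ∀ y ∈ A, lapAt u y = 0)
    (hucont : ContinuousOn u (closure A))
    (c : Esp n) (α ε M : ℝ)
    (hsub : ∀ y ∈ A, 0 ≤ ε * (4*α^2 * qf c y - 2*α*(n:ℝ)))
    (hbd : ∀ y ∈ frontier A, u y + ε * Real.exp (-(α * qf c y)) ≤ M) :
    ∀ y ∈ closure A, u y + ε * Real.exp (-(α * qf c y)) ≤ M := by
  rcases A.eq_empty_or_nonempty with rfl | hne
  · simp
  have hcomp : IsCompact (closure A) :=
    Metric.isCompact_of_isClosed_isBounded isClosed_closure hb.closure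
  obtain ⟨yR, _, hyR⟩ := hcomp.exists_isMaxOn hne.closure (continuous_qf c).continuousOn
  set R := qf c yR with hR
  have hR0 : 0 ≤ R := qf_nonneg c yR
  intro y hy
  have key : ∀ η : ℝ, 0 < η → u y + ε * Real.exp (-(α * qf c y)) ≤ M + η * R := by
    intro η hη
    have hcontf : ContinuousOn (fun z => u z + gf c α ε η z) (closure A) :=
      hucont.add ((contDiff_gf c α ε η).continuous.continuousOn)
    have hf2 : ContDiffOn ℝ 2 (fun z => u z + gf c α ε η z) A :=
      hu2.add ((contDiff_gf c α ε η).contDiffOn)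
    have hlapf : ∀ z ∈ A, 0 < lapAt (fun w => u w + gf c α ε η w) z := by
      intro z hz
      rw [lapAt_add_gf hA hz hu2 c α ε η, hlap z hz, lapAt_gf, zero_add]
      have h1 : 0 ≤ Real.exp (-(α * qf c z)) * (ε * (4*α^2 * qf c z - 2*α*(n:ℝ))) :=
        mul_nonneg (Real.exp_pos _).le (hsub z hz)
      have h2 : 0 < 2*(n:ℝ)*η := by positivity
      nlinarith [h1, h2]
    obtain ⟨z, hzf, hzmax⟩ := max_on_frontier hA hb hne hcontf hf2 hlapf
    have hzc : z ∈ closure A := by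
      have := frontier_subset_closure (s := A); exact this hzf
    have h3 : u z + gf c α ε η z ≤ M + η * R := by
      rw [gf]
      have := hbd z hzf
      have hqz : qf c z ≤ R := isMaxOn_iff.1 hyR z hzc
      nlinarith [this, hqz, hη]
    have h4 : u y + gf c α ε η y ≤ M + η * R := le_trans (hzmax y hy) h3
    have h5 : 0 ≤ η * qf c y := mul_nonneg hη.le (qf_nonneg c y)
    rw [gf] at h4
    linarith
  apply le_of_forall_pos_le_add
  intro δ hδ
  rcases le_or_gt R 0 with hRle | hRpos
  · have := key 1 one_pos
    nlinarith
  · have := key (δ / R) (by positivity)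
    rw [div_mul_cancel₀ _ (ne_of_gt hRpos)] at this
    linarith


theorem qf_eq_norm (c y : Esp n) : qf c y = ‖y - c‖^2 := by
  rw [EuclideanSpace.norm_eq, Real.sq_sqrt (Finset.sum_nonneg fun i _ => sq_nonneg _)]
  unfold qf
  apply Finset.sum_congr rfl
  intro i _
  rw [Real.norm_eq_abs, sq_abs]
  congr 1

theorem coord_abs_le_norm (y : Esp n) (i : Fin n) : |y i| ≤ ‖y‖ := by
  rw [EuclideanSpace.norm_eq, ← Real.sqrt_sq_eq_abs]
  apply Real.sqrt_le_sqrt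
  have : (y i)^2 ≤ ∑ j : Fin n, ‖y j‖^2 := by
    have := Finset.single_le_sum (f := fun j => ‖y j‖^2)
      (fun j _ => sq_nonneg _) (Finset.mem_univ i)
    simpa [Real.norm_eq_abs, sq_abs] using this
  exact this

set_option maxHeartbeats 2000000 in
theorem hopf (hn : 0 < n) {u : Esp n → ℝ} {U : Set (Esp n)} (hU : IsOpen U)
    (hu2 : ContDiffOn ℝ 2 u U) (hlap : ∀ y ∈ U, lapAt u y = 0)
    (c p : Esp n) (r : ℝ) (hr : 0 < r) (hp : ‖p - c‖ = r)
    (hAU : {y : Esp n | r/2 < ‖y - c‖ ∧ ‖y - c‖ < r} ⊆ U)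
    (hcontD : ContinuousOn u {y : Esp n | r/2 ≤ ‖y - c‖ ∧ ‖y - c‖ ≤ r})
    (hleD : ∀ y : Esp n, r/2 ≤ ‖y - c‖ → ‖y - c‖ ≤ r → u y ≤ 0)
    (hneg : ∀ y : Esp n, ‖y - c‖ = r/2 → u y < 0) :
    ∃ K, 0 < K ∧ ∀ t ∈ Set.Ioo (0:ℝ) (1/2), u (p + t • (c - p)) ≤ -(K * t) := by
  set A := {y : Esp n | r/2 < ‖y - c‖ ∧ ‖y - c‖ < r} with hAdef
  have hnormcont : Continuous fun y : Esp n => ‖y - c‖ :=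
    (continuous_id.sub continuous_const).norm
  have hAopen : IsOpen A := by
    have h1 : IsOpen {y : Esp n | r/2 < ‖y - c‖} := isOpen_lt continuous_const hnormcont
    have h2 : IsOpen {y : Esp n | ‖y - c‖ < r} := isOpen_lt hnormcont continuous_const
    exact h1.inter h2
  have hAbd : Bornology.IsBounded A := by
    apply Metric.isBounded_ball (x := c) (r := r) |>.subset
    intro y hy
    rw [Metric.mem_ball, dist_eq_norm]
    exact hy.2
  have hDclosed : IsClosed {y : Esp n | r/2 ≤ ‖y - c‖ ∧ ‖y - c‖ ≤ r} :=
    (isClosed_le continuous_const hnormcont).inter (isClosed_le hnormcont continuous_const)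
  have hAD : A ⊆ {y : Esp n | r/2 ≤ ‖y - c‖ ∧ ‖y - c‖ ≤ r} :=
    fun y hy => ⟨hy.1.le, hy.2.le⟩
  have hclD : closure A ⊆ {y : Esp n | r/2 ≤ ‖y - c‖ ∧ ‖y - c‖ ≤ r} :=
    closure_minimal hAD hDclosed
  set α := (2*(n:ℝ) + r^2)/r^2 with hαdef
  have hα : 0 < α := by positivity
  have hαr : α * r^2 = 2*(n:ℝ) + r^2 := by
    rw [hαdef, div_mul_cancel₀ _ (by positivity)]
  -- inner sphere maximum
  have hSne : (Metric.sphere c (r/2)).Nonempty := by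
    refine ⟨c + (r/2) • sgl ⟨0, hn⟩, ?_⟩
    rw [Metric.mem_sphere, dist_eq_norm]
    simp only [add_sub_cancel_left]
    rw [norm_smul, Real.norm_eq_abs, abs_of_pos (by positivity)]
    rw [sgl]
    simp [EuclideanSpace.norm_single]
  have hSD : Metric.sphere c (r/2) ⊆ {y : Esp n | r/2 ≤ ‖y - c‖ ∧ ‖y - c‖ ≤ r} := by
    intro y hy
    rw [Metric.mem_sphere, dist_eq_norm] at hy
    constructor <;> rw [hy] <;> linarith
  obtain ⟨ym, hymS, hym⟩ := (isCompact_sphere c (r/2)).exists_isMaxOn hSne (hcontD.mono hSD)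
  have hymnorm : ‖ym - c‖ = r/2 := by
    rw [← dist_eq_norm]; exact hymS
  have hm : u ym < 0 := hneg ym hymnorm
  set W0 := Real.exp (-(α*(r/2)^2)) - Real.exp (-(α*r^2)) with hW0def
  have hW0 : 0 < W0 := by
    rw [hW0def, sub_pos]
    apply Real.exp_lt_exp.2
    nlinarith
  set ε := (-(u ym))/W0 with hεdef
  have hε : 0 < ε := by
    rw [hεdef]
    apply div_pos (by linarith) hW0
  have hεW0 : ε * W0 = -(u ym) := by
    rw [hεdef, div_mul_cancel₀ _ (ne_of_gt hW0)]
  set M := ε * Real.exp (-(α*r^2)) with hMdef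
  -- boundary bound
  have hbd : ∀ y ∈ frontier A, u y + ε * Real.exp (-(α * qf c y)) ≤ M := by
    intro y hy
    rw [hAopen.frontier_eq] at hy
    have hyD := hclD hy.1
    have hyA := hy.2
    have hcases : ‖y - c‖ = r/2 ∨ ‖y - c‖ = r := by
      rcases eq_or_lt_of_le hyD.1 with h | h
      · exact Or.inl h.symm
      · rcases eq_or_lt_of_le hyD.2 with h2 | h2
        · exact Or.inr h2
        · exact absurd ⟨h, h2⟩ hyA
    rcases hcases with h | h
    · have hq : qf c y = (r/2)^2 := by rw [qf_eq_norm, h]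
      have hu : u y ≤ u ym := isMaxOn_iff.1 hym y (by rw [Metric.mem_sphere, dist_eq_norm]; exact h)
      rw [hq, hMdef]
      have : Real.exp (-(α*(r/2)^2)) = W0 + Real.exp (-(α*r^2)) := by rw [hW0def]; ring
      rw [this]
      nlinarith [hεW0]
    · have hq : qf c y = r^2 := by rw [qf_eq_norm, h]
      have hu : u y ≤ 0 := hleD y hyD.1 hyD.2
      rw [hq, hMdef]
      linarith
  -- strict subharmonicity bound
  have hsub : ∀ y ∈ A, 0 ≤ ε * (4*α^2 * qf c y - 2*α*(n:ℝ)) := by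
    intro y hy
    have hq : qf c y = ‖y - c‖^2 := qf_eq_norm c y
    have h1 : r^2/4 ≤ qf c y := by
      rw [hq]
      nlinarith [hy.1, hr]
    have h2 : 0 ≤ 4*α^2 * qf c y - 2*α*(n:ℝ) := by
      nlinarith [hαr, hα, hr, h1]
    positivity
  have hcomp := comparison hn hAopen hAbd (hu2.mono hAU)
    (fun y hy => hlap y (hAU hy)) (hcontD.mono hclD) c α ε M hsub hbd
  -- conclusion
  refine ⟨ε * Real.exp (-(α*r^2)) * α * r^2, by positivity, ?_⟩
  intro t ht
  set yt := p + t • (c - p) with hytdef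
  have hytc : yt - c = (1 - t) • (p - c) := by
    rw [hytdef]
    module
  have hytnorm : ‖yt - c‖ = (1 - t) * r := by
    rw [hytc, norm_smul, Real.norm_eq_abs, abs_of_pos (by linarith [ht.2] : (0:ℝ) < 1 - t), hp]
  have hytA : yt ∈ A := by
    constructor <;> rw [hytnorm] <;> nlinarith [ht.1, ht.2, hr]
  have hq : qf c yt = ((1-t)*r)^2 := by rw [qf_eq_norm, hytnorm]
  have hcy := hcomp yt (subset_closure hytA)
  rw [hq] at hcy
  -- exponential estimate
  set x := α*r^2*(2*t - t^2) with hxdef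
  have hx0 : 0 ≤ x := by
    rw [hxdef]
    have h2 : (0:ℝ) ≤ 2*t - t^2 := by nlinarith [ht.1, ht.2]
    exact mul_nonneg (mul_nonneg hα.le (sq_nonneg r)) h2
  have hexp : Real.exp (-(α * ((1-t)*r)^2)) = Real.exp (-(α*r^2)) * Real.exp x := by
    rw [← Real.exp_add]
    congr 1
    rw [hxdef]
    ring
  rw [hexp] at hcy
  have hxe : x + 1 ≤ Real.exp x := Real.add_one_le_exp x
  have hE1 : 0 < Real.exp (-(α*r^2)) := Real.exp_pos _
  have htx : α*r^2*t ≤ x := by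
    rw [hxdef]
    have h2t : t ≤ 2*t - t^2 := by nlinarith [ht.1, ht.2]
    nlinarith [hα, hr, h2t]
  rw [hMdef] at hcy
  nlinarith [hcy, mul_pos hε hE1, mul_le_mul_of_nonneg_left htx (le_of_lt (mul_pos hε hE1)),
    mul_le_mul_of_nonneg_left hxe (le_of_lt (mul_pos hε hE1))]


theorem le_infDist' {s : Set (Esp n)} (hne : s.Nonempty) {x : Esp n} {d : ℝ}
    (h : ∀ w ∈ s, d ≤ dist x w) : d ≤ Metric.infDist x s := by
  obtain ⟨w0, hw0⟩ := hne
  rw [Metric.infDist]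
  rw [← ENNReal.ofReal_le_iff_le_toReal (Metric.infEdist_ne_top ⟨w0, hw0⟩)]
  apply EMetric.le_infEdist.2
  intro w hw
  calc ENNReal.ofReal d ≤ ENNReal.ofReal (dist x w) := ENNReal.ofReal_le_ofReal (h w hw)
  _ = edist x w := (edist_dist x w).symm

theorem no_neg_slope {g : ℝ → ℝ}
    (hg : Filter.Tendsto (fun t => g t / t) (nhdsWithin 0 (Set.Ioi 0)) (nhds 0))
    {K : ℝ} (hK : 0 < K) (h : ∀ t ∈ Set.Ioo (0:ℝ) (1/2), g t ≤ -(K*t)) : False := by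
  have hev : ∀ᶠ t in nhdsWithin 0 (Set.Ioi 0), g t / t ≤ -K := by
    filter_upwards [Ioo_mem_nhdsGT_of_mem (show (0:ℝ) ∈ Set.Ico (0:ℝ) (1/2) by constructor <;> norm_num)]
      with t ht
    have h1 := h t ht
    have ht0 : 0 < t := ht.1
    rw [div_le_iff₀ ht0]
    nlinarith
  have := le_of_tendsto hg hev
  linarith


end S5

end -- noncomputable section

open Metric Set Filter S5

set_option maxHeartbeats 2000000 in
/-- Hopf boundary point argument. A nonpositive harmonic function on the upper
half unit ball `V`, continuous up to the flat face `L`, vanishing on `L` and with vanishing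
one-sided normal derivative at the origin, vanishes identically on `V`. -/
theorem stmt_5 (n : ℕ) (hn : 2 ≤ n)
    (V L : Set (EuclideanSpace ℝ (Fin n)))
    (hV : V = {y : EuclideanSpace ℝ (Fin n) | ‖y‖ < 1 ∧ 0 < y ⟨n - 1, by omega⟩})
    (hL : L = {y : EuclideanSpace ℝ (Fin n) | ‖y‖ < 1 ∧ y ⟨n - 1, by omega⟩ = 0})
    (e : EuclideanSpace ℝ (Fin n))
    (he : e = EuclideanSpace.single ⟨n - 1, by omega⟩ (1 : ℝ))
    (u : EuclideanSpace ℝ (Fin n) → ℝ)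
    (hcont : ContinuousOn u (V ∪ L))
    (hharm : IsHarmonicOn u V)
    (hnonpos : ∀ y ∈ V, u y ≤ 0)
    (hzero : ∀ y ∈ L, u y = 0)
    (hderiv : Filter.Tendsto (fun t : ℝ => u (t • e) / t)
      (nhdsWithin 0 (Set.Ioi 0)) (nhds 0)) :
    ∀ y ∈ V, u y = 0 := by
  intro y hy
  by_contra hne0
  have hylt : u y < 0 := lt_of_le_of_ne (hnonpos y hy) hne0
  have hn0 : 0 < n := by omega
  set ι : Fin n := ⟨n - 1, by omega⟩ with hι
  have hproj : Continuous fun z : EuclideanSpace ℝ (Fin n) => z ι :=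
    (EuclideanSpace.proj (𝕜 := ℝ) ι).continuous
  have hVopen : IsOpen V := by
    rw [hV]
    exact (isOpen_lt continuous_norm continuous_const).and (isOpen_lt continuous_const hproj)
  have hVconv : Convex ℝ V := by
    rw [hV]
    have hset : {z : EuclideanSpace ℝ (Fin n) | ‖z‖ < 1 ∧ 0 < z ι}
        = Metric.ball 0 1 ∩ {z : EuclideanSpace ℝ (Fin n) | 0 < z ι} := by
      ext z
      simp [Metric.mem_ball, dist_zero_right]
    rw [show {y : EuclideanSpace ℝ (Fin n) | ‖y‖ < 1 ∧ 0 < y ι}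
        = Metric.ball 0 1 ∩ {z : EuclideanSpace ℝ (Fin n) | 0 < z ι} from hset]
    exact (convex_ball 0 1).inter (convex_halfSpace_gt ⟨fun a b => rfl, fun c x => rfl⟩ 0)
  have hu2 : ContDiffOn ℝ 2 u V := hharm.1
  have hlapu : ∀ z ∈ V, S5.lapAt u z = 0 := hharm.2
  have hucont : ContinuousOn u V := hu2.continuousOn
  set W := V ∩ u ⁻¹' Set.Iio 0 with hWdef
  have hWopen : IsOpen W := hucont.isOpen_inter_preimage hVopen isOpen_Iio
  -- boundary-point claim
  have claim : ∀ p ∈ V, p ∈ closure W → p ∈ W := by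
    intro p hpV hpcl
    by_contra hpW
    have hup0 : u p = 0 := by
      have h1 : ¬ u p < 0 := fun h => hpW ⟨hpV, h⟩
      have := hnonpos p hpV
      linarith [not_lt.1 h1]
    obtain ⟨d0, hd0, hball⟩ := Metric.isOpen_iff.1 hVopen p hpV
    set d := d0/2 with hd
    have hdpos : 0 < d := by rw [hd]; positivity
    have hcb : Metric.closedBall p d ⊆ V :=
      subset_trans (Metric.closedBall_subset_ball (by rw [hd]; linarith)) hball
    obtain ⟨q, hqW, hqd⟩ := Metric.mem_closure_iff.1 hpcl (d/3) (by positivity)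
    set ρ := Metric.infDist q Wᶜ with hρ
    have hWc_ne : Wᶜ.Nonempty := ⟨p, hpW⟩
    have hρpos : 0 < ρ := by
      obtain ⟨s0, hs0, hbq⟩ := Metric.isOpen_iff.1 hWopen q hqW
      have hle := le_infDist' hWc_ne (x := q) (d := s0) ?_
      · linarith
      · intro w hw
        by_contra hlt
        push_neg at hlt
        exact hw (hbq (by rwa [Metric.mem_ball, dist_comm]))
    have hρle : ρ ≤ dist q p := Metric.infDist_le_dist_of_mem hpW
    have hballW : Metric.ball q ρ ⊆ W := by
      intro z hz
      by_contra hzW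
      have := Metric.infDist_le_dist_of_mem (x := q) (show z ∈ Wᶜ from hzW)
      rw [Metric.mem_ball, dist_comm] at hz
      linarith
    obtain ⟨p', hp'Wc, hp'dist⟩ :=
      IsClosed.exists_infDist_eq_dist (isClosed_compl_iff.2 hWopen) hWc_ne q
    have hdqp' : dist q p' = ρ := hp'dist.symm
    have hqp : dist q p < d/3 := by rw [dist_comm]; exact hqd
    have hcbq : Metric.closedBall q ρ ⊆ V := by
      intro z hz
      apply hcb
      rw [Metric.mem_closedBall] at hz ⊢
      calc dist z p ≤ dist z q + dist q p := dist_triangle z q p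
        _ ≤ ρ + dist q p := by linarith
        _ ≤ d := by linarith
    have hp'V : p' ∈ V := by
      apply hcbq
      rw [Metric.mem_closedBall, dist_comm]
      exact le_of_eq hdqp'
    have hup' : u p' = 0 := by
      have h1 : ¬ u p' < 0 := fun h => hp'Wc ⟨hp'V, h⟩
      linarith [hnonpos p' hp'V, not_lt.1 h1]
    have hAU : {z : EuclideanSpace ℝ (Fin n) | ρ/2 < ‖z - q‖ ∧ ‖z - q‖ < ρ} ⊆ V := by
      intro z hz
      exact (hballW (by rw [Metric.mem_ball, dist_eq_norm]; exact hz.2)).1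
    have hcontD : ContinuousOn u {z : EuclideanSpace ℝ (Fin n) | ρ/2 ≤ ‖z - q‖ ∧ ‖z - q‖ ≤ ρ} :=
      hucont.mono (fun z hz => hcbq (by rw [Metric.mem_closedBall, dist_eq_norm]; exact hz.2))
    have hleD : ∀ z : EuclideanSpace ℝ (Fin n), ρ/2 ≤ ‖z - q‖ → ‖z - q‖ ≤ ρ → u z ≤ 0 :=
      fun z _ h2 => hnonpos z (hcbq (by rw [Metric.mem_closedBall, dist_eq_norm]; exact h2))
    have hnegS : ∀ z : EuclideanSpace ℝ (Fin n), ‖z - q‖ = ρ/2 → u z < 0 := by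
      intro z hz
      exact (hballW (by rw [Metric.mem_ball, dist_eq_norm, hz]; linarith)).2
    have hnorm_p'q : ‖p' - q‖ = ρ := by
      rw [← dist_eq_norm, dist_comm]
      exact hdqp'
    obtain ⟨K, hK, hKb⟩ := S5.hopf hn0 hVopen hu2 hlapu q p' ρ hρpos hnorm_p'q
      hAU hcontD hleD hnegS
    -- derivative contradiction at p'
    have hmaxp' : IsLocalMax u p' := by
      filter_upwards [hVopen.mem_nhds hp'V] with z hz
      rw [hup']
      exact hnonpos z hz
    have hf0 : fderiv ℝ u p' = 0 := hmaxp'.fderiv_eq_zero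
    have hψ : HasDerivAt (fun t : ℝ => p' + t • (q - p')) (q - p') 0 := by
      simpa using ((hasDerivAt_id (0:ℝ)).smul_const (q - p')).const_add p'
    have hdu : DifferentiableAt ℝ u p' :=
      (hu2.differentiableOn (by norm_num)).differentiableAt (hVopen.mem_nhds hp'V)
    have hd' : HasFDerivAt u (fderiv ℝ u p') (p' + (0:ℝ) • (q - p')) := by
      rw [zero_smul, add_zero]
      exact hdu.hasFDerivAt
    have hg : HasDerivAt (fun t : ℝ => u (p' + t • (q - p'))) 0 0 := by
      have := hd'.comp_hasDerivAt 0 hψ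
      simp [hf0] at this
      exact this
    have hg0 : u (p' + (0:ℝ) • (q - p')) = 0 := by
      rw [zero_smul, add_zero]
      exact hup'
    have hslope : Filter.Tendsto (fun t => u (p' + t • (q - p')) / t)
        (nhdsWithin 0 (Set.Ioi 0)) (nhds 0) := by
      have h1 := hasDerivAt_iff_tendsto_slope.1 hg
      have h2 := h1.mono_left (nhdsWithin_mono 0 (fun t ht => ne_of_gt ht))
      refine h2.congr ?_
      intro t
      rw [slope_def_field, hg0]
      simp only [zero_sub, sub_zero, neg_div_neg_eq]
    exact S5.no_neg_slope hslope hK (fun t ht => hKb t ht)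
  -- strong maximum principle: V ⊆ W
  have hVW : V ⊆ W := by
    by_contra hnot
    rw [Set.not_subset] at hnot
    obtain ⟨z, hzV, hzW⟩ := hnot
    have hzcl : z ∉ closure W := fun h => hzW (claim z hzV h)
    have hpre : IsPreconnected V := hVconv.isPreconnected
    obtain ⟨w, hw⟩ := hpre W (closure W)ᶜ hWopen isClosed_closure.isOpen_compl
      (fun x hx => (em (x ∈ closure W)).elim (fun h => Or.inl (claim x hx h)) Or.inr)
      ⟨y, hy, ⟨hy, hylt⟩⟩ ⟨z, hzV, hzcl⟩
    exact hw.2.2 (subset_closure hw.2.1)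
  -- Hopf at the origin
  set c0 : EuclideanSpace ℝ (Fin n) := (1/4 : ℝ) • e with hc0
  have he1 : ‖e‖ = 1 := by rw [he]; simp [EuclideanSpace.norm_single]
  have heι : e ι = 1 := by rw [he]; simp [EuclideanSpace.single_apply]
  have hc0ι : c0 ι = 1/4 := by
    rw [hc0]
    have : ((1/4 : ℝ) • e) ι = (1/4 : ℝ) * e ι := rfl
    rw [this, heι, mul_one]
  have hc0norm : ‖c0‖ = 1/4 := by
    rw [hc0, norm_smul, he1]
    norm_num
  have hcoord : ∀ z : EuclideanSpace ℝ (Fin n), |z ι - 1/4| ≤ ‖z - c0‖ := by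
    intro z
    have h1 := S5.coord_abs_le_norm (z - c0) ι
    have h2 : (z - c0) ι = z ι - c0 ι := rfl
    rw [h2, hc0ι] at h1
    exact h1
  have hsubV : ∀ z : EuclideanSpace ℝ (Fin n), ‖z - c0‖ ≤ 1/4 → (‖z‖ ≤ 1/2 ∧ 1/4 - ‖z - c0‖ ≤ z ι) := by
    intro z hz
    constructor
    · calc ‖z‖ = ‖(z - c0) + c0‖ := by rw [sub_add_cancel]
        _ ≤ ‖z - c0‖ + ‖c0‖ := norm_add_le _ _
        _ ≤ 1/2 := by rw [hc0norm]; linarith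
    · have := abs_le.1 (hcoord z)
      linarith [this.1]
  have hAU0 : {z : EuclideanSpace ℝ (Fin n) | (1/4:ℝ)/2 < ‖z - c0‖ ∧ ‖z - c0‖ < 1/4} ⊆ V := by
    intro z hz
    obtain ⟨h1, h2⟩ := hsubV z hz.2.le
    rw [hV]
    exact ⟨by linarith, by linarith [hz.2]⟩
  have hDVL : {z : EuclideanSpace ℝ (Fin n) | (1/4:ℝ)/2 ≤ ‖z - c0‖ ∧ ‖z - c0‖ ≤ 1/4} ⊆ V ∪ L := by
    intro z hz
    obtain ⟨h1, h2⟩ := hsubV z hz.2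
    have hzι : 0 ≤ z ι := by linarith [hz.2]
    rcases hzι.lt_or_eq with h | h
    · left; rw [hV]; exact ⟨by linarith, h⟩
    · right; rw [hL]; exact ⟨by linarith, h.symm⟩
  have hcontD0 : ContinuousOn u {z : EuclideanSpace ℝ (Fin n) | (1/4:ℝ)/2 ≤ ‖z - c0‖ ∧ ‖z - c0‖ ≤ 1/4} :=
    hcont.mono hDVL
  have hleD0 : ∀ z : EuclideanSpace ℝ (Fin n), (1/4:ℝ)/2 ≤ ‖z - c0‖ → ‖z - c0‖ ≤ 1/4 → u z ≤ 0 := by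
    intro z h1 h2
    rcases hDVL ⟨h1, h2⟩ with h | h
    · exact hnonpos z h
    · exact (hzero z h).le
  have hneg0 : ∀ z : EuclideanSpace ℝ (Fin n), ‖z - c0‖ = (1/4:ℝ)/2 → u z < 0 := by
    intro z hz
    have hzV : z ∈ V := by
      obtain ⟨h1, h2⟩ := hsubV z (by rw [hz]; norm_num)
      rw [hV]
      constructor
      · linarith
      · rw [hz] at h2; norm_num at h2 ⊢; linarith
    exact (hVW hzV).2
  have hp0 : ‖(0 : EuclideanSpace ℝ (Fin n)) - c0‖ = 1/4 := by
    rw [zero_sub, norm_neg, hc0norm]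
  obtain ⟨K, hK, hKb⟩ := S5.hopf hn0 hVopen hu2 hlapu c0 0 (1/4) (by norm_num) hp0
    hAU0 hcontD0 hleD0 hneg0
  have hKb' : ∀ t ∈ Set.Ioo (0:ℝ) (1/2), u ((t/4) • e) ≤ -(K * t) := by
    intro t ht
    have hb := hKb t ht
    have harg : (0 : EuclideanSpace ℝ (Fin n)) + t • (c0 - 0) = (t/4) • e := by
      rw [hc0, sub_zero, zero_add, smul_smul]
      congr 1
      ring
    rwa [harg] at hb
  have h4 : Filter.Tendsto (fun t : ℝ => t/4) (nhdsWithin 0 (Set.Ioi 0)) (nhdsWithin 0 (Set.Ioi 0)) := by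
    rw [tendsto_nhdsWithin_iff]
    constructor
    · have h1 : Filter.Tendsto (fun t : ℝ => t/4) (nhds 0) (nhds (0/4)) :=
        (continuous_id.div_const 4).tendsto 0
      rw [show (0:ℝ)/4 = 0 by norm_num] at h1
      exact h1.mono_left nhdsWithin_le_nhds
    · filter_upwards [self_mem_nhdsWithin] with t ht
      exact Set.mem_Ioi.2 (div_pos (Set.mem_Ioi.1 ht) (by norm_num))
  have hcomp := hderiv.comp h4
  have hmul := hcomp.mul_const (1/4 : ℝ)
  rw [zero_mul] at hmul
  have heq : (fun t : ℝ => ((fun s : ℝ => u (s • e) / s) ∘ (fun t : ℝ => t/4)) t * (1/4))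
      =ᶠ[nhdsWithin 0 (Set.Ioi 0)] (fun t : ℝ => u ((t/4) • e) / t) := by
    filter_upwards [self_mem_nhdsWithin] with t (ht : t ∈ Set.Ioi 0)
    have ht0 : t ≠ 0 := ne_of_gt ht
    simp only [Function.comp]
    field_simp
  have hslope0 : Filter.Tendsto (fun t : ℝ => u ((t/4) • e) / t)
      (nhdsWithin 0 (Set.Ioi 0)) (nhds 0) := hmul.congr' heq
  exact S5.no_neg_slope hslope0 hK hKb'
end

section
/- Let n ≥ 1, k ≥ 2, and let A : ℝ^{n+1} → ℝ^{k−1} be a linear map with operator norm ‖A‖ ≤ 1. Suppose t₁, …, tₙ ∈ ℝ^{n+1} are vectors such that the n vectors (tᵢ, A tᵢ) ∈ ℝ^{n+1} × ℝ^{k−1} form an orthonormal family. Then |⟨tᵢ, tⱼ⟩ − δ_{ij}| ≤ ‖A‖² for all i, j, and the Gram determinant satisfies det((⟨tᵢ, tⱼ⟩)_{i,j}) ≥ 1 − 2ⁿ · n! · n · ‖A‖². -/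
open RealInnerProductSpace

open Finset in

lemma prod_bound' {ι : Type*} [DecidableEq ι] (s : Finset ι) (f g : ι → ℝ) (C ε : ℝ)
    (hC : 1 ≤ C) (hε : 0 ≤ ε)
    (hf : ∀ i ∈ s, |f i| ≤ C) (hg : ∀ i ∈ s, |g i| ≤ C)
    (hfg : ∀ i ∈ s, |f i - g i| ≤ ε) :
    |∏ i ∈ s, f i - ∏ i ∈ s, g i| ≤ s.card * C ^ s.card * ε := by
  induction s using Finset.induction_on with
  | empty => simp [hε]
  | @insert a s ha ih =>
    rw [Finset.prod_insert ha, Finset.prod_insert ha, Finset.card_insert_of_notMem ha]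
    have key : f a * ∏ i ∈ s, f i - g a * ∏ i ∈ s, g i
        = (f a - g a) * ∏ i ∈ s, f i + g a * (∏ i ∈ s, f i - ∏ i ∈ s, g i) := by ring
    have hpf : |∏ i ∈ s, f i| ≤ C ^ s.card := by
      calc |∏ i ∈ s, f i| = ∏ i ∈ s, |f i| := Finset.abs_prod s f
        _ ≤ ∏ i ∈ s, C := Finset.prod_le_prod (fun i _ => abs_nonneg _)
              (fun i hi => hf i (Finset.mem_insert_of_mem hi))
        _ = C ^ s.card := Finset.prod_const C
    have h1 : |(f a - g a) * ∏ i ∈ s, f i| ≤ ε * C ^ s.card := by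
      rw [abs_mul]
      exact mul_le_mul (hfg a (Finset.mem_insert_self a s)) hpf (abs_nonneg _)
        (le_trans (abs_nonneg _) (hfg a (Finset.mem_insert_self a s)))
    have h2 : |g a * (∏ i ∈ s, f i - ∏ i ∈ s, g i)| ≤ C * (s.card * C ^ s.card * ε) := by
      rw [abs_mul]
      exact mul_le_mul (hg a (Finset.mem_insert_self a s))
        (ih (fun i hi => hf i (Finset.mem_insert_of_mem hi))
            (fun i hi => hg i (Finset.mem_insert_of_mem hi))
            (fun i hi => hfg i (Finset.mem_insert_of_mem hi)))
        (abs_nonneg _) (le_trans zero_le_one hC)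
    calc |f a * ∏ i ∈ s, f i - g a * ∏ i ∈ s, g i|
        ≤ ε * C ^ s.card + C * (s.card * C ^ s.card * ε) := by
          rw [key]; exact le_trans (abs_add_le _ _) (add_le_add h1 h2)
      _ ≤ (s.card + 1 : ℕ) * C ^ (s.card + 1) * ε := by
          have h0C : (0:ℝ) ≤ C := le_trans zero_le_one hC
          have hCp : (0:ℝ) ≤ C ^ s.card := pow_nonneg h0C _
          rw [pow_succ]
          push_cast
          nlinarith [mul_le_mul_of_nonneg_left hC (mul_nonneg hCp hε),
            mul_nonneg (mul_nonneg (Nat.cast_nonneg s.card : (0:ℝ) ≤ s.card) hCp)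
              (mul_nonneg hε h0C)]


/-- Gram matrix estimate for the horizontal components of an orthonormal frame
tangent to the graph of a linear map `A` with `‖A‖ ≤ 1`. -/
theorem stmt_7 (n k : ℕ) (hn : 1 ≤ n) (hk : 2 ≤ k)
    (A : EuclideanSpace ℝ (Fin (n + 1)) →L[ℝ] EuclideanSpace ℝ (Fin (k - 1)))
    (hA : ‖A‖ ≤ 1)
    (t : Fin n → EuclideanSpace ℝ (Fin (n + 1)))
    (hortho : Orthonormal ℝ (fun i =>
      (WithLp.equiv 2
        (EuclideanSpace ℝ (Fin (n + 1)) × EuclideanSpace ℝ (Fin (k - 1)))).symm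
        (t i, A (t i)))) :
    (∀ i j, |⟪t i, t j⟫ - if i = j then 1 else 0| ≤ ‖A‖ ^ 2) ∧
      1 - 2 ^ n * (n.factorial : ℝ) * n * ‖A‖ ^ 2 ≤
        (Matrix.of fun i j => ⟪t i, t j⟫).det := by
  have hsum : ∀ i j, ⟪t i, t j⟫ + ⟪A (t i), A (t j)⟫ = if i = j then (1:ℝ) else 0 := by
    intro i j
    have := (orthonormal_iff_ite.mp hortho) i j
    exact this
  have hA0 : (0:ℝ) ≤ ‖A‖ := norm_nonneg A
  have hε : (0:ℝ) ≤ ‖A‖ ^ 2 := by positivity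
  have hε1 : ‖A‖ ^ 2 ≤ 1 := by nlinarith
  have htn : ∀ i, ‖t i‖ ≤ 1 := by
    intro i
    have h := hsum i i
    rw [real_inner_self_eq_norm_sq, real_inner_self_eq_norm_sq] at h
    simp at h
    nlinarith [norm_nonneg (t i), norm_nonneg (A (t i))]
  have part1 : ∀ i j, |⟪t i, t j⟫ - if i = j then (1:ℝ) else 0| ≤ ‖A‖ ^ 2 := by
    intro i j
    have h := hsum i j
    have : ⟪t i, t j⟫ - (if i = j then (1:ℝ) else 0) = -⟪A (t i), A (t j)⟫ := by
      linarith
    rw [this, abs_neg]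
    calc |⟪A (t i), A (t j)⟫| ≤ ‖A (t i)‖ * ‖A (t j)‖ := abs_real_inner_le_norm _ _
      _ ≤ (‖A‖ * ‖t i‖) * (‖A‖ * ‖t j‖) := by
          exact mul_le_mul (A.le_opNorm _) (A.le_opNorm _) (norm_nonneg _)
            (by positivity)
      _ ≤ ‖A‖ * ‖A‖ := by
          have h1 : ‖A‖ * ‖t i‖ ≤ ‖A‖ := by nlinarith [htn i, norm_nonneg (t i)]
          have h2 : ‖A‖ * ‖t j‖ ≤ ‖A‖ := by nlinarith [htn j, norm_nonneg (t j)]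
          exact mul_le_mul h1 h2 (by positivity) hA0
      _ = ‖A‖ ^ 2 := (sq ‖A‖).symm
  refine ⟨part1, ?_⟩
  set M : Matrix (Fin n) (Fin n) ℝ := Matrix.of fun i j => ⟪t i, t j⟫ with hM
  have hMent : ∀ i j, |M i j| ≤ 2 := by
    intro i j
    have h := part1 i j
    have : |(if i = j then (1:ℝ) else 0)| ≤ 1 := by split <;> norm_num
    calc |M i j| ≤ |M i j - if i = j then (1:ℝ) else 0| + |if i = j then (1:ℝ) else 0| := by
          have := abs_add_le (M i j - if i = j then (1:ℝ) else 0) (if i = j then (1:ℝ) else 0)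
          simpa using this
      _ ≤ ‖A‖ ^ 2 + 1 := add_le_add h this
      _ ≤ 2 := by linarith
  have hIent : ∀ i j, |(1 : Matrix (Fin n) (Fin n) ℝ) i j| ≤ 2 := by
    intro i j
    rw [Matrix.one_apply]
    split <;> norm_num
  have hdiff : ∀ i j, |M i j - (1 : Matrix (Fin n) (Fin n) ℝ) i j| ≤ ‖A‖ ^ 2 := by
    intro i j
    rw [Matrix.one_apply]
    exact part1 i j
  have hperm : ∀ σ : Equiv.Perm (Fin n),
      |(∏ i, M (σ i) i) - ∏ i, (1 : Matrix (Fin n) (Fin n) ℝ) (σ i) i|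
        ≤ n * 2 ^ n * ‖A‖ ^ 2 := by
    intro σ
    have := prod_bound' Finset.univ (fun i => M (σ i) i)
      (fun i => (1 : Matrix (Fin n) (Fin n) ℝ) (σ i) i) 2 (‖A‖ ^ 2)
      one_le_two hε (fun i _ => hMent _ _) (fun i _ => hIent _ _) (fun i _ => hdiff _ _)
    simpa using this
  have hdet : |M.det - 1| ≤ 2 ^ n * (n.factorial : ℝ) * n * ‖A‖ ^ 2 := by
    have hone : (1 : ℝ) = (1 : Matrix (Fin n) (Fin n) ℝ).det := (Matrix.det_one).symm
    rw [hone, Matrix.det_apply, Matrix.det_apply, ← Finset.sum_sub_distrib]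
    calc |∑ σ : Equiv.Perm (Fin n),
          (Equiv.Perm.sign σ • ∏ i, M (σ i) i
            - Equiv.Perm.sign σ • ∏ i, (1 : Matrix (Fin n) (Fin n) ℝ) (σ i) i)|
        ≤ ∑ σ : Equiv.Perm (Fin n), (n * 2 ^ n * ‖A‖ ^ 2 : ℝ) := by
          refine le_trans (Finset.abs_sum_le_sum_abs _ _) (Finset.sum_le_sum fun σ _ => ?_)
          rw [← smul_sub]
          rcases Int.units_eq_one_or (Equiv.Perm.sign σ) with h | h <;> rw [h]
          · simpa using hperm σ
          · simpa [abs_sub_comm] using hperm σ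
      _ = 2 ^ n * (n.factorial : ℝ) * n * ‖A‖ ^ 2 := by
          rw [Finset.sum_const, Finset.card_univ, Fintype.card_perm, Fintype.card_fin,
            nsmul_eq_mul]
          ring
  have := abs_le.mp hdet
  linarith [this.1]
end
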